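/- Let d ≥ 1 and R_1 ≤ R_2, and let μ be any measure of maximal entropy of the Widom–Rowlinson SFT W_{R_1,R_2}. If β denotes the μ-measure of the set of points whose symbol at the origin is nonzero, then −(1−β) log(1−β) − β log(β/2) ≥ (log 2)/(R_1+1)^d; in particular β ≥ β', where β' > 0 is determined by −(1−β') log(1−β') − β' log(β'/2) = (log 2)/(R_1+1)^d. -/

import Mathlib

open Filter MeasureTheory

/-! ### Basic setup: `ℤ^d` configurations, the shift action, subshifts -/

/-- A site of the lattice `ℤ^d`. -/
abbrev Site (d : ℕ) := Fin d → ℤ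

/-- A configuration over the alphabet `A` on the lattice `ℤ^d`. -/
abbrev Config (d : ℕ) (A : Type*) := Site d → A

/-- The product (discrete) topology on the space of configurations. -/
def configTop (d : ℕ) (A : Type*) : TopologicalSpace (Config d A) :=
  @Pi.topologicalSpace (Site d) (fun _ => A) (fun _ => ⊥)

/-- The product (discrete) Borel σ-algebra on the space of configurations. -/
def configMS (d : ℕ) (A : Type*) : MeasurableSpace (Config d A) :=
  @MeasurableSpace.pi (Site d) (fun _ => A) (fun _ => ⊤)

/-- Borel measures on the configuration space. -/
abbrev ConfigMeasure (d : ℕ) (A : Type*) :=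
  @MeasureTheory.Measure (Config d A) (configMS d A)

/-- The shift action of `ℤ^d`: `(shift t x) s = x (s + t)`. -/
def shift {d : ℕ} {A : Type*} (t : Site d) (x : Config d A) : Config d A :=
  fun s => x (s + t)

/-- A `ℤ^d` subshift over the alphabet `A`: a closed shift-invariant set of
configurations. -/
structure Subshift (d : ℕ) (A : Type*) where
  carrier : Set (Config d A)
  isClosed' : @IsClosed (Config d A) (configTop d A) carrier
  shift_mem' : ∀ (t : Site d), ∀ x ∈ carrier, shift t x ∈ carrier

/-- A pattern `p`, whose (finite) shape is the finite set `S ⊆ ℤ^d`, belongs to the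
language of the subshift `X` if it appears (somewhere) in a point of `X`. -/
def inLanguage {d : ℕ} {A : Type*} (X : Subshift d A) {S : Finset (Site d)}
    (p : S → A) : Prop :=
  ∃ x ∈ X.carrier, ∃ v : Site d, ∀ s : S, x (v + ↑s) = p s

/-- The box `∏_{i} [1, n i] ⊆ ℤ^d`. -/
noncomputable def boxF (d : ℕ) (n : Fin d → ℕ) : Finset (Site d) :=
  Fintype.piFinset fun i => Finset.Icc (1 : ℤ) (n i)

/-- The cube `[1, N]^d ⊆ ℤ^d`. -/
noncomputable def cubeF (d N : ℕ) : Finset (Site d) := boxF d fun _ => N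

/-- The cube `[-n, n]^d ⊆ ℤ^d`. -/
noncomputable def symCube (d : ℕ) (n : ℕ) : Finset (Site d) :=
  Fintype.piFinset fun _ => Finset.Icc (-(n : ℤ)) (n : ℤ)

/-- The number of patterns of shape `S` in the language of `X`. -/
noncomputable def patternCount {d : ℕ} {A : Type*} (X : Subshift d A)
    (S : Finset (Site d)) : ℕ :=
  Nat.card { p : S → A // inLanguage X p }

/-- Topological entropy of a subshift:
`h(X) = lim_{n₁,…,n_d → ∞} (1/∏ nᵢ) log |L_{∏ [1,nᵢ]}(X)|`. -/
noncomputable def topEnt {d : ℕ} {A : Type*} (X : Subshift d A) : ℝ :=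
  Filter.limsup
    (fun n : Fin d → ℕ =>
      Real.log (patternCount X (boxF d n)) / ∏ i, (n i : ℝ))
    Filter.atTop

/-- The cylinder set determined by a pattern `p` with finite shape `S`. -/
def cylinder {d : ℕ} {A : Type*} {S : Finset (Site d)} (p : S → A) :
    Set (Config d A) :=
  { x | ∀ s : S, x ↑s = p s }

/-- `H_{μ,N}`: the entropy of `μ` with respect to the partition of the configuration
space given by the patterns of shape `[1,N]^d`. -/
noncomputable def blockEntropy {d : ℕ} {A : Type*} (μ : ConfigMeasure d A)
    (N : ℕ) : ℝ :=
  ∑' p : (cubeF d N → A), Real.negMulLog (μ (cylinder p)).toReal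

/-- Measure-theoretic entropy `h(μ) = lim_N H_{μ,N}/N^d = inf_N H_{μ,N}/N^d`. -/
noncomputable def measEnt {d : ℕ} {A : Type*} (μ : ConfigMeasure d A) : ℝ :=
  ⨅ N : ℕ, blockEntropy μ (N + 1) / ((N : ℝ) + 1) ^ d

/-- `μ` is a shift-invariant Borel probability measure on the subshift `X`. -/
def InvariantProbOn {d : ℕ} {A : Type*} (X : Subshift d A)
    (μ : ConfigMeasure d A) : Prop :=
  @IsProbabilityMeasure _ (configMS d A) μ ∧ μ X.carrier = 1 ∧
    ∀ t : Site d,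
      @MeasureTheory.Measure.map _ _ (configMS d A) (configMS d A) (shift t) μ = μ

/-- `μ` is a measure of maximal entropy for the subshift `X`. -/
def IsMME {d : ℕ} {A : Type*} (X : Subshift d A) (μ : ConfigMeasure d A) : Prop :=
  InvariantProbOn X μ ∧ measEnt μ = topEnt X

/-- A subshift is intrinsically ergodic if it has exactly one measure of maximal
entropy. -/
def IntrinsicallyErgodic {d : ℕ} {A : Type*} (X : Subshift d A) : Prop :=
  ∃! μ : ConfigMeasure d A, IsMME X μ

/-- `φ` is a (topological) factor map from the subshift `X` onto the subshift `Y`: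
a continuous shift-commuting surjection. -/
def IsFactorMapOn {d : ℕ} {A B : Type*} (X : Subshift d A) (Y : Subshift d B)
    (φ : Config d A → Config d B) : Prop :=
  @ContinuousOn _ _ (configTop d A) (configTop d B) φ X.carrier ∧
  (∀ x ∈ X.carrier, φ x ∈ Y.carrier) ∧
  (∀ (t : Site d), ∀ x ∈ X.carrier, φ (shift t x) = shift t (φ x)) ∧
  (∀ y ∈ Y.carrier, ∃ x ∈ X.carrier, φ x = y)

/-- The D*-condition: for any `n` there exists `k_n` such that for any `x, y ∈ X`
there is `z ∈ X` agreeing with `x` on `[-n,n]^d` and with `y` off `[-(n+k_n),n+k_n]^d`. -/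
def DStarCondition {d : ℕ} {A : Type*} (X : Subshift d A) : Prop :=
  ∀ n : ℕ, ∃ k : ℕ, ∀ x ∈ X.carrier, ∀ y ∈ X.carrier, ∃ z ∈ X.carrier,
    (∀ t : Site d, (∀ i, |t i| ≤ (n : ℤ)) → z t = x t) ∧
    (∀ t : Site d, ¬ (∀ i, |t i| ≤ (n : ℤ) + (k : ℤ)) → z t = y t)

/-! ### The Widom–Rowlinson shift of finite type -/

/-- The alphabet `{0, +, -}` of the Widom–Rowlinson SFT. -/
inductive WRSymbol : Type
  | zero : WRSymbol
  | plus : WRSymbol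
  | minus : WRSymbol
deriving DecidableEq

instance : Fintype WRSymbol where
  elems := {WRSymbol.zero, WRSymbol.plus, WRSymbol.minus}
  complete := fun x => by cases x <;> simp

/-- The local (pairwise) constraints of the Widom–Rowlinson SFT with interaction
distances `R₁ ≤ R₂`: nonzero symbols at `ℓ∞`-distance `≤ R₁` are forbidden, and
nonzero symbols of opposite sign at `ℓ∞`-distance `≤ R₂` are forbidden. -/
def WRpair (R₁ R₂ : ℕ) {d : ℕ} (s t : Site d) (u v : WRSymbol) : Prop :=
  (s ≠ t → u ≠ WRSymbol.zero → v ≠ WRSymbol.zero → ∃ i, (R₁ : ℤ) < |s i - t i|) ∧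
  (u = WRSymbol.plus → v = WRSymbol.minus → ∃ i, (R₂ : ℤ) < |s i - t i|)

lemma isClosed_pairCond {d : ℕ} {A : Type*} (s t : Site d) (P : A → A → Prop) :
    @IsClosed (Config d A) (configTop d A) { x | P (x s) (x t) } := by
  letI : TopologicalSpace A := ⊥
  haveI : DiscreteTopology A := ⟨rfl⟩
  have hc : Continuous (fun x : Config d A => ((x s, x t) : A × A)) :=
    Continuous.prodMk (continuous_apply s) (continuous_apply t)
  have h : { x : Config d A | P (x s) (x t) } =
      (fun x : Config d A => ((x s, x t) : A × A)) ⁻¹' { p : A × A | P p.1 p.2 } := rfl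
  rw [h]
  exact (isClosed_discrete _).preimage hc

/-- The `ℤ^d` Widom–Rowlinson SFT with interaction distances `R₁` and `R₂`. -/
def WR (d R₁ R₂ : ℕ) : Subshift d WRSymbol where
  carrier := { x | ∀ s t : Site d, WRpair R₁ R₂ s t (x s) (x t) }
  isClosed' := by
    letI : TopologicalSpace WRSymbol := ⊥
    have h : { x : Config d WRSymbol | ∀ s t : Site d, WRpair R₁ R₂ s t (x s) (x t) } =
        ⋂ (s : Site d) (t : Site d),
          { x : Config d WRSymbol | WRpair R₁ R₂ s t (x s) (x t) } := by
      ext x; simp [Set.mem_iInter]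
    rw [h]
    exact isClosed_iInter fun s => isClosed_iInter fun t => isClosed_pairCond s t _
  shift_mem' := by
    intro t0 x hx s t
    have h := hx (s + t0) (t + t0)
    have key : ∀ i : Fin d, (s + t0) i - (t + t0) i = s i - t i := by
      intro i; simp
    constructor
    · intro hst hu hv
      have hne : s + t0 ≠ t + t0 := fun hc => hst (by
        funext i
        have := congrFun hc i
        simpa using this)
      obtain ⟨i, hi⟩ := h.1 hne hu hv
      exact ⟨i, by rwa [key i] at hi⟩
    · intro hu hv
      obtain ⟨i, hi⟩ := h.2 hu hv
      exact ⟨i, by rwa [key i] at hi⟩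

section Counting

variable {d : ℕ}

/-- Sublattice of spacing `R₁+1` inside the box `∏ [1, n i]`. -/
def subLat (d R₁ : ℕ) (n : Fin d → ℕ) : Finset (Site d) :=
  Fintype.piFinset fun i =>
    (Finset.range ((n i - 1) / (R₁ + 1) + 1)).image (fun k : ℕ => (1 : ℤ) + (R₁ + 1) * k)

lemma affInj (R₁ : ℕ) : Function.Injective (fun k : ℕ => (1 : ℤ) + (R₁ + 1) * k) := by
  intro a b h
  simp only at h
  have h2 : ((R₁ : ℤ) + 1) * a = ((R₁ : ℤ) + 1) * b := by linarith
  have h3 := mul_left_cancel₀ (by positivity : ((R₁ : ℤ) + 1) ≠ 0) h2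
  exact_mod_cast h3

lemma mem_subLat {R₁ : ℕ} {n : Fin d → ℕ} {s : Site d} :
    s ∈ subLat d R₁ n ↔ ∀ i, ∃ k < (n i - 1) / (R₁ + 1) + 1, s i = 1 + (R₁ + 1) * k := by
  simp only [subLat, Fintype.mem_piFinset, Finset.mem_image, Finset.mem_range]
  constructor
  · intro h i; obtain ⟨k, hk, he⟩ := h i; exact ⟨k, hk, he.symm⟩
  · intro h i; obtain ⟨k, hk, he⟩ := h i; exact ⟨k, hk, he.symm⟩

lemma card_subLat (R₁ : ℕ) (n : Fin d → ℕ) :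
    (subLat d R₁ n).card = ∏ i, ((n i - 1) / (R₁ + 1) + 1) := by
  rw [subLat, Fintype.card_piFinset]
  congr 1
  funext i
  rw [Finset.card_image_of_injective _ (affInj R₁), Finset.card_range]

lemma natDivBound {m r : ℕ} (hm : 1 ≤ m) : m ≤ (r + 1) * ((m - 1) / (r + 1) + 1) := by
  have h1 := Nat.div_add_mod (m - 1) (r + 1)
  have h2 := Nat.mod_lt (m - 1) (show 0 < r + 1 by omega)
  have h3 : (r + 1) * ((m - 1) / (r + 1) + 1) = (r + 1) * ((m - 1) / (r + 1)) + (r + 1) := by ring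
  omega

lemma subLat_subset_box {R₁ : ℕ} {n : Fin d → ℕ} (hn : ∀ i, 1 ≤ n i) :
    subLat d R₁ n ⊆ boxF d n := by
  intro s hs
  rw [mem_subLat] at hs
  rw [boxF, Fintype.mem_piFinset]
  intro i
  obtain ⟨k, hk, he⟩ := hs i
  rw [Finset.mem_Icc, he]
  have hk' : k ≤ (n i - 1) / (R₁ + 1) := by omega
  have h2 : (R₁ + 1) * k ≤ (R₁ + 1) * ((n i - 1) / (R₁ + 1)) := Nat.mul_le_mul_left _ hk'
  have h3 : (R₁ + 1) * ((n i - 1) / (R₁ + 1)) ≤ n i - 1 := Nat.mul_div_le _ _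
  have h4 : (R₁ + 1) * k ≤ n i - 1 := le_trans h2 h3
  have h5 := hn i
  have h6 : (0:ℤ) ≤ ((R₁ : ℤ) + 1) * k := by positivity
  constructor
  · linarith
  · have : ((R₁ : ℤ) + 1) * k ≤ (n i : ℤ) - 1 := by exact_mod_cast (by omega : (R₁+1)*k ≤ n i - 1)
    linarith

/-- The configuration which is `plus` on the chosen sublattice sites, `zero` elsewhere. -/
def flipCfg (R₁ : ℕ) (n : Fin d → ℕ) (τ : { s // s ∈ subLat d R₁ n } → Bool) :
    Config d WRSymbol :=
  fun s => if h : s ∈ subLat d R₁ n then (if τ ⟨s, h⟩ then WRSymbol.plus else WRSymbol.zero)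
    else WRSymbol.zero

lemma flipCfg_ne_minus (R₁ : ℕ) (n : Fin d → ℕ) (τ : { s // s ∈ subLat d R₁ n } → Bool)
    (s : Site d) : flipCfg R₁ n τ s ≠ WRSymbol.minus := by
  unfold flipCfg
  split <;> [skip; simp]
  split <;> simp

lemma flipCfg_mem_subLat {R₁ : ℕ} {n : Fin d → ℕ} {τ : { s // s ∈ subLat d R₁ n } → Bool}
    {s : Site d} (h : flipCfg R₁ n τ s ≠ WRSymbol.zero) : s ∈ subLat d R₁ n := by
  by_contra hc
  exact h (by simp [flipCfg, hc])

lemma flipCfg_mem_WR (R₁ R₂ : ℕ) (n : Fin d → ℕ)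
    (τ : { s // s ∈ subLat d R₁ n } → Bool) :
    flipCfg R₁ n τ ∈ (WR d R₁ R₂).carrier := by
  intro s t
  constructor
  · intro hst hu hv
    have hs := flipCfg_mem_subLat hu
    have ht := flipCfg_mem_subLat hv
    rw [mem_subLat] at hs ht
    have : ∃ i, s i ≠ t i := by
      by_contra hc
      push_neg at hc
      exact hst (funext hc)
    obtain ⟨i, hi⟩ := this
    obtain ⟨ka, _, hea⟩ := hs i
    obtain ⟨kb, _, heb⟩ := ht i
    refine ⟨i, ?_⟩
    have hkk : (ka : ℤ) ≠ (kb : ℤ) := by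
      intro hc
      apply hi
      rw [hea, heb, hc]
    have habs : (1 : ℤ) ≤ |(ka : ℤ) - kb| := Int.one_le_abs (sub_ne_zero.mpr hkk)
    have : s i - t i = ((R₁ : ℤ) + 1) * ((ka : ℤ) - kb) := by rw [hea, heb]; ring
    rw [this, abs_mul, abs_of_pos (by positivity : (0:ℤ) < (R₁ : ℤ) + 1)]
    nlinarith
  · intro _ hv
    exact absurd hv (flipCfg_ne_minus R₁ n τ t)

lemma count_lower (R₁ R₂ : ℕ) (n : Fin d → ℕ) (hn : ∀ i, 1 ≤ n i) :
    2 ^ (∏ i, ((n i - 1) / (R₁ + 1) + 1)) ≤ patternCount (WR d R₁ R₂) (boxF d n) := by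
  classical
  set S := subLat d R₁ n with hS
  have hsub := subLat_subset_box (R₁ := R₁) hn
  let F : ({ s // s ∈ S } → Bool) → { p : { s // s ∈ boxF d n } → WRSymbol //
      inLanguage (WR d R₁ R₂) p } := fun τ =>
    ⟨fun s => flipCfg R₁ n τ ↑s, by
      refine ⟨flipCfg R₁ n τ, flipCfg_mem_WR R₁ R₂ n τ, 0, ?_⟩
      intro s
      rw [zero_add]⟩
  have hF : Function.Injective F := by
    intro τ τ' h
    funext s
    have h1 := congrFun (congrArg Subtype.val h) ⟨(s : Site d), hsub s.2⟩
    change flipCfg R₁ n τ (s : Site d) = flipCfg R₁ n τ' (s : Site d) at h1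
    simp only [flipCfg] at h1
    rw [dif_pos s.2, dif_pos s.2] at h1
    by_contra hc
    rcases Bool.eq_false_or_eq_true (τ s) with h2 | h2 <;>
      rcases Bool.eq_false_or_eq_true (τ' s) with h3 | h3 <;>
      simp_all
  calc 2 ^ (∏ i, ((n i - 1) / (R₁ + 1) + 1))
      = Nat.card ({ s // s ∈ S } → Bool) := by
        rw [Nat.card_eq_fintype_card, Fintype.card_fun, Fintype.card_bool]
        congr 1
        exact ((Fintype.card_coe _).trans (card_subLat R₁ n)).symm
    _ ≤ _ := Nat.card_le_card_of_injective F hF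

lemma card_boxF (n : Fin d → ℕ) : (boxF d n).card = ∏ i, n i := by
  rw [boxF, Fintype.card_piFinset]
  congr 1
  funext i
  rw [Int.card_Icc]
  simp

lemma count_upper (R₁ R₂ : ℕ) (n : Fin d → ℕ) :
    patternCount (WR d R₁ R₂) (boxF d n) ≤ 3 ^ ∏ i, n i := by
  classical
  calc patternCount (WR d R₁ R₂) (boxF d n)
      ≤ Nat.card ({ s // s ∈ boxF d n } → WRSymbol) :=
        Nat.card_le_card_of_injective Subtype.val Subtype.val_injective
    _ = 3 ^ ∏ i, n i := by
        rw [Nat.card_eq_fintype_card, Fintype.card_fun]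
        rw [Fintype.card_coe, card_boxF]
        have h3 : Fintype.card WRSymbol = 3 := rfl
        rw [h3]

end Counting
section TopEntLB

variable {d : ℕ}

lemma topEnt_WR_lower (R₁ R₂ : ℕ) :
    Real.log 2 / ((R₁ : ℝ) + 1) ^ d ≤ topEnt (WR d R₁ R₂) := by
  set c : ℝ := Real.log 2 / ((R₁ : ℝ) + 1) ^ d with hc
  have hbd : Filter.IsBoundedUnder (· ≤ ·) Filter.atTop
      (fun n : Fin d → ℕ =>
        Real.log (patternCount (WR d R₁ R₂) (boxF d n)) / ∏ i, (n i : ℝ)) := by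
    refine Filter.isBoundedUnder_of ⟨Real.log 3, fun n => ?_⟩
    rcases eq_or_lt_of_le (Finset.prod_nonneg (fun i _ => by positivity) :
        (0:ℝ) ≤ ∏ i, (n i : ℝ)) with h | h
    · rw [← h, div_zero]
      exact Real.log_nonneg (by norm_num)
    · rw [div_le_iff₀ h]
      have h1 : (patternCount (WR d R₁ R₂) (boxF d n) : ℝ) ≤ (3 : ℝ) ^ ∏ i, n i := by
        exact_mod_cast Nat.cast_le.mpr (count_upper R₁ R₂ n)
      have h2 : Real.log (patternCount (WR d R₁ R₂) (boxF d n)) ≤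
          Real.log ((3 : ℝ) ^ ∏ i, n i) := by
        rcases Nat.eq_zero_or_pos (patternCount (WR d R₁ R₂) (boxF d n)) with h0 | h0
        · rw [h0]; simp
          positivity
        · exact Real.log_le_log (by exact_mod_cast h0) h1
      refine h2.trans ?_
      rw [Real.log_pow]
      rw [← Nat.cast_prod]
      exact le_of_eq (by rw [Nat.cast_prod]; ring)
  refine Filter.le_limsup_of_frequently_le ?_ hbd
  · have hev : ∀ᶠ n : Fin d → ℕ in Filter.atTop, (fun _ => 1 : Fin d → ℕ) ≤ n :=
      Filter.eventually_ge_atTop _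
    refine (hev.mono ?_).frequently
    intro n hn
    have hn' : ∀ i, 1 ≤ n i := fun i => hn i
    set P := patternCount (WR d R₁ R₂) (boxF d n) with hP
    set K := ∏ i, ((n i - 1) / (R₁ + 1) + 1) with hK
    have hlow : 2 ^ K ≤ P := count_lower R₁ R₂ n hn'
    have hKn : (∏ i, n i) ≤ K * (R₁ + 1) ^ d := by
      calc ∏ i, n i ≤ ∏ i, ((R₁ + 1) * ((n i - 1) / (R₁ + 1) + 1)) :=
            Finset.prod_le_prod (fun i _ => Nat.zero_le _)
              (fun i _ => natDivBound (hn' i))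
        _ = K * (R₁ + 1) ^ d := by
            rw [Finset.prod_mul_distrib, Finset.prod_const, hK]
            simp [mul_comm, Finset.card_univ]
  -- real-number estimates
    have hprodpos : (0:ℝ) < ∏ i, (n i : ℝ) := by
      apply Finset.prod_pos
      intro i _
      exact_mod_cast hn' i
    have hlogP : (K : ℝ) * Real.log 2 ≤ Real.log P := by
      have h2 : Real.log ((2:ℝ) ^ K) ≤ Real.log P :=
        Real.log_le_log (by positivity) (by exact_mod_cast hlow)
      rwa [Real.log_pow] at h2
    rw [hc, div_le_div_iff₀ (by positivity) hprodpos]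
    calc Real.log 2 * ∏ i, (n i : ℝ) ≤ Real.log 2 * ((K : ℝ) * ((R₁ : ℝ) + 1) ^ d) := by
          have : (∏ i, (n i : ℝ)) ≤ (K : ℝ) * ((R₁ : ℝ) + 1) ^ d := by
            rw [← Nat.cast_prod]
            exact_mod_cast hKn
          nlinarith [Real.log_nonneg (by norm_num : (1:ℝ) ≤ 2)]
      _ = ((K : ℝ) * Real.log 2) * ((R₁ : ℝ) + 1) ^ d := by ring
      _ ≤ Real.log P * ((R₁ : ℝ) + 1) ^ d := by
          have : (0:ℝ) ≤ ((R₁ : ℝ) + 1) ^ d := by positivity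
          nlinarith
end TopEntLB
section MeasureSide

variable {d : ℕ}

lemma measEnt_le_block1 {A : Type*} (μ : ConfigMeasure d A)
    (hp : @IsProbabilityMeasure _ (configMS d A) μ) :
    measEnt μ ≤ blockEntropy μ 1 := by
  letI : MeasurableSpace (Config d A) := configMS d A
  haveI : IsProbabilityMeasure μ := hp
  have h0 : ∀ N : ℕ, 0 ≤ blockEntropy μ (N + 1) / ((N : ℝ) + 1) ^ d := by
    intro N
    apply div_nonneg _ (by positivity)
    apply tsum_nonneg
    intro p
    apply Real.negMulLog_nonneg ENNReal.toReal_nonneg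
    have h1 : μ (cylinder p) ≤ 1 := prob_le_one
    calc (μ (cylinder p)).toReal ≤ (1 : ENNReal).toReal := ENNReal.toReal_mono ENNReal.one_ne_top h1
      _ = 1 := by simp
  have hb : BddBelow (Set.range fun N : ℕ => blockEntropy μ (N + 1) / ((N : ℝ) + 1) ^ d) :=
    ⟨0, by rintro x ⟨N, rfl⟩; exact h0 N⟩
  have h2 := ciInf_le hb 0
  simpa [measEnt] using h2

lemma entropy3_bound {p m : ℝ} (hp : 0 ≤ p) (hm : 0 ≤ m) :
    Real.negMulLog p + Real.negMulLog m ≤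
      Real.negMulLog (p + m) + (p + m) * Real.log 2 := by
  have key : Real.negMulLog p + Real.negMulLog m ≤ 2 * Real.negMulLog ((p + m) / 2) := by
    have h := Real.concaveOn_negMulLog.2 (Set.mem_Ici.mpr hp) (Set.mem_Ici.mpr hm)
      (by norm_num : (0:ℝ) ≤ (1:ℝ)/2) (by norm_num : (0:ℝ) ≤ (1:ℝ)/2) (by norm_num)
    simp only [smul_eq_mul] at h
    have he : (1:ℝ)/2 * p + 1/2 * m = (p + m) / 2 := by ring
    rw [he] at h
    linarith
  have heq : 2 * Real.negMulLog ((p + m) / 2)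
      = Real.negMulLog (p + m) + (p + m) * Real.log 2 := by
    rcases eq_or_lt_of_le (add_nonneg hp hm) with h | h
    · rw [← h]; simp [Real.negMulLog]
    · unfold Real.negMulLog
      rw [Real.log_div (by linarith) (by norm_num)]
      ring
  linarith

lemma fg_eq (t : ℝ) : -(1 - t) * Real.log (1 - t) - t * Real.log (t / 2)
    = Real.negMulLog (1 - t) + Real.negMulLog t + t * Real.log 2 := by
  rcases eq_or_ne t 0 with h | h
  · subst h; simp [Real.negMulLog]
  · unfold Real.negMulLog
    rw [Real.log_div h (by norm_num)]
    ring

lemma exists_beta' {c b : ℝ} (hc : 0 < c) (hb : 0 ≤ b)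
    (hcb : c ≤ Real.negMulLog (1 - b) + Real.negMulLog b + b * Real.log 2) :
    ∃ β', 0 < β' ∧
      Real.negMulLog (1 - β') + Real.negMulLog β' + β' * Real.log 2 = c ∧ β' ≤ b := by
  set g : ℝ → ℝ := fun t => Real.negMulLog (1 - t) + Real.negMulLog t + t * Real.log 2 with hg
  have hcont : Continuous g := by
    refine ((Real.continuous_negMulLog.comp (continuous_const.sub continuous_id)).add
      Real.continuous_negMulLog).add (continuous_id.mul continuous_const)
  have hg0 : g 0 = 0 := by simp [hg, Real.negMulLog]
  have hmem : c ∈ Set.Icc (g 0) (g b) := ⟨by rw [hg0]; exact hc.le, hcb⟩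
  obtain ⟨β', hβ'mem, hβ'eq⟩ := intermediate_value_Icc hb hcont.continuousOn hmem
  refine ⟨β', ?_, hβ'eq, hβ'mem.2⟩
  rcases eq_or_lt_of_le hβ'mem.1 with h | h
  · exfalso; rw [← h, hg0] at hβ'eq; linarith
  · exact h

lemma sum_WRSymbol (g : WRSymbol → ℝ) :
    ∑ a : WRSymbol, g a = g WRSymbol.zero + g WRSymbol.plus + g WRSymbol.minus := by
  rw [show (Finset.univ : Finset WRSymbol)
      = {WRSymbol.zero, WRSymbol.plus, WRSymbol.minus} by decide]
  rw [Finset.sum_insert (by decide), Finset.sum_insert (by decide), Finset.sum_singleton]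
  ring

end MeasureSide
/-- Let `μ` be any measure of maximal entropy of `W_{R₁,R₂}` and let
`β` be the `μ`-measure of the set of points whose symbol at the origin is nonzero. Then
`-(1-β)log(1-β) - β log(β/2) ≥ (log 2)/(R₁+1)^d`; in particular `β ≥ β'` for some
`β' > 0` with `-(1-β')log(1-β') - β' log(β'/2) = (log 2)/(R₁+1)^d`. -/
theorem statement8 {d : ℕ} (hd : 1 ≤ d) (R₁ R₂ : ℕ) (hR : R₁ ≤ R₂)
    (μ : ConfigMeasure d WRSymbol) (hμ : IsMME (WR d R₁ R₂) μ) (β : ℝ)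
    (hβ : β = (μ { x : Config d WRSymbol | x 0 ≠ WRSymbol.zero }).toReal) :
    Real.log 2 / ((R₁ : ℝ) + 1) ^ d ≤
      -(1 - β) * Real.log (1 - β) - β * Real.log (β / 2) ∧
    ∃ β' : ℝ, 0 < β' ∧
      -(1 - β') * Real.log (1 - β') - β' * Real.log (β' / 2) =
        Real.log 2 / ((R₁ : ℝ) + 1) ^ d ∧
      β' ≤ β := by
  classical
  letI : MeasurableSpace WRSymbol := ⊤
  letI : MeasurableSpace (Config d WRSymbol) := configMS d WRSymbol
  obtain ⟨⟨hprob, hcar, hinv⟩, hent⟩ := hμ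
  haveI : IsProbabilityMeasure μ := hprob
  -- measurability of single-site sets
  have hmeas_site : ∀ (t : Site d) (a : WRSymbol),
      MeasurableSet {x : Config d WRSymbol | x t = a} := by
    intro t a
    have h1 : Measurable (fun x : Config d WRSymbol => x t) := measurable_pi_apply t
    have h3 : {x : Config d WRSymbol | x t = a} = (fun x : Config d WRSymbol => x t) ⁻¹' {a} :=
      rfl
    rw [h3]
    exact h1 (MeasurableSpace.measurableSet_top)
  have hshift_meas : ∀ t : Site d, Measurable (shift (A := WRSymbol) t) := by
    intro t
    apply measurable_pi_lambda
    intro s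
    exact measurable_pi_apply (s + t)
  -- single-site shift invariance
  have hsite : ∀ a : WRSymbol,
      μ {x : Config d WRSymbol | x (fun _ => 1 : Site d) = a} = μ {x | x 0 = a} := by
    intro a
    have h := hinv (fun _ => 1 : Site d)
    have h2 := MeasureTheory.Measure.map_apply (μ := μ) (hshift_meas (fun _ => 1))
      (hmeas_site 0 a)
    rw [h] at h2
    have hseteq : shift (A := WRSymbol) (fun _ => 1 : Site d) ⁻¹' {x : Config d WRSymbol | x 0 = a}
        = {x : Config d WRSymbol | x (fun _ => 1 : Site d) = a} := by
      ext x
      simp only [Set.mem_preimage, Set.mem_setOf_eq, shift, zero_add]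
    rw [hseteq] at h2
    exact h2.symm
  -- the cube [1,1]^d is a single site
  have hcube : ∀ s : Site d, s ∈ cubeF d 1 ↔ s = (fun _ => 1 : Site d) := by
    intro s
    rw [cubeF, boxF, Fintype.mem_piFinset]
    constructor
    · intro h
      funext i
      have h2 := h i
      rw [Finset.mem_Icc] at h2
      push_cast at h2
      omega
    · intro h
      subst h
      intro i
      simp
  letI huniq : Unique {s // s ∈ cubeF d 1} :=
    { default := ⟨(fun _ => 1 : Site d), (hcube _).mpr rfl⟩,
      uniq := fun a => Subtype.ext ((hcube _).mp a.2) }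
  -- block entropy at N = 1
  have hblock : blockEntropy μ 1 = ∑ a : WRSymbol,
      Real.negMulLog (μ {x : Config d WRSymbol | x 0 = a}).toReal := by
    rw [blockEntropy, tsum_fintype]
    apply Fintype.sum_equiv (Equiv.funUnique {s // s ∈ cubeF d 1} WRSymbol)
    intro p
    have hcyl : cylinder p = {x : Config d WRSymbol | x (fun _ => 1 : Site d) = p default} := by
      ext x
      constructor
      · intro hx
        exact hx default
      · intro hx s
        rw [Unique.eq_default s]
        exact hx
    rw [hcyl, hsite (p default)]
    rfl
  -- probability bookkeeping
  set Sz := {x : Config d WRSymbol | x 0 = WRSymbol.zero} with hSz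
  set Sp := {x : Config d WRSymbol | x 0 = WRSymbol.plus} with hSp
  set Sm := {x : Config d WRSymbol | x 0 = WRSymbol.minus} with hSm
  have hcomp : {x : Config d WRSymbol | x 0 ≠ WRSymbol.zero} = Szᶜ := by
    ext x; simp [hSz]
  have hunion : Szᶜ = Sp ∪ Sm := by
    ext x
    cases h : x 0 <;> simp [hSz, hSp, hSm, h]
  have hdisj : Disjoint Sp Sm := by
    rw [Set.disjoint_left]
    intro x hx1 hx2
    rw [hSp, Set.mem_setOf_eq] at hx1
    rw [hSm, Set.mem_setOf_eq] at hx2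
    rw [hx1] at hx2
    exact WRSymbol.noConfusion hx2
  have h1 : μ Szᶜ = μ Sp + μ Sm := by
    rw [hunion]
    exact measure_union hdisj (hmeas_site 0 WRSymbol.minus)
  have h2 : μ Sz + μ Szᶜ = 1 := by
    rw [measure_add_measure_compl (hmeas_site 0 WRSymbol.zero), measure_univ]
  have hβ' : β = (μ Szᶜ).toReal := by rw [hβ, hcomp]
  set z := (μ Sz).toReal with hz
  set p := (μ Sp).toReal with hp
  set m := (μ Sm).toReal with hm
  have hpm : p + m = β := by
    rw [hβ', h1, ENNReal.toReal_add (measure_ne_top μ _) (measure_ne_top μ _)]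
  have hzβ : z = 1 - β := by
    have h3 : z + β = 1 := by
      rw [hβ', hz, ← ENNReal.toReal_add (measure_ne_top μ _) (measure_ne_top μ _), h2]
      simp
    linarith
  -- entropy estimate
  have hblock2 : blockEntropy μ 1 ≤
      Real.negMulLog (1 - β) + Real.negMulLog β + β * Real.log 2 := by
    rw [hblock, sum_WRSymbol]
    have hb := entropy3_bound (hp ▸ ENNReal.toReal_nonneg : (0:ℝ) ≤ p)
      (hm ▸ ENNReal.toReal_nonneg : (0:ℝ) ≤ m)
    rw [hpm] at hb
    have hzz : Real.negMulLog (μ {x : Config d WRSymbol | x 0 = WRSymbol.zero}).toReal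
        = Real.negMulLog (1 - β) := by rw [← hSz, ← hz, hzβ]
    rw [hzz]
    have hpp : (μ {x : Config d WRSymbol | x 0 = WRSymbol.plus}).toReal = p := by rw [← hSp]
    have hmm : (μ {x : Config d WRSymbol | x 0 = WRSymbol.minus}).toReal = m := by rw [← hSm]
    rw [hpp, hmm]
    linarith
  -- main chain of inequalities
  have hchain : Real.log 2 / ((R₁ : ℝ) + 1) ^ d ≤
      Real.negMulLog (1 - β) + Real.negMulLog β + β * Real.log 2 := by
    calc Real.log 2 / ((R₁ : ℝ) + 1) ^ d ≤ topEnt (WR d R₁ R₂) := topEnt_WR_lower R₁ R₂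
      _ = measEnt μ := hent.symm
      _ ≤ blockEntropy μ 1 := measEnt_le_block1 μ hprob
      _ ≤ _ := hblock2
  have hc0 : 0 < Real.log 2 / ((R₁ : ℝ) + 1) ^ d := by
    apply div_pos (Real.log_pos (by norm_num))
    positivity
  have hβnn : 0 ≤ β := by
    rw [hβ]
    exact ENNReal.toReal_nonneg
  constructor
  · rw [fg_eq]
    exact hchain
  · obtain ⟨β', hβ'pos, hβ'eq, hβ'le⟩ := exists_beta' hc0 hβnn hchain
    exact ⟨β', hβ'pos, by rw [fg_eq]; exact hβ'eq, hβ'le⟩
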